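/- arXiv:1811.08675 — 7 statements merged into one kernel-verified Lean document; each statement's English description precedes it below -/
import Mathlib

section
/- Let $p$ be a prime and $N \geq 1$ an integer. Define $D_s(N) := \sum_{m \equiv s \pmod p} (-1)^m \binom{N}{m}$. Then the $(p-1)\times(p-1)$ integer matrix $\Delta$ with entries $\Delta_{i,s} = D_s(N + i - 1)$ for $1 \leq i, s \leq p-1$ has determinant equal to $\pm p^m$ for some integer $m \geq 0$; in particular $\det \Delta$ is invertible in $\mathbb{Z}[1/p]$. -/
/-- `D_s(N) = Σ_{m ≡ s mod p, 0 ≤ m ≤ N} (-1)^m C(N,m)`. -/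
def Dcoef (p N : ℕ) (s : ℤ) : ℤ :=
  ∑ m ∈ Finset.range (N + 1),
    if (m : ZMod p) = (s : ZMod p) then (-1) ^ m * (N.choose m : ℤ) else 0

lemma root_filter_ne {K : Type*} [Field K] {p : ℕ} {u : K} (hu : u ^ p = 1)
    (h : u ≠ 1) : ∑ j ∈ Finset.range p, u ^ j = 0 := by
  have h2 := geom_sum_mul u p
  rw [hu, sub_self] at h2
  rcases mul_eq_zero.mp h2 with h1 | h1
  · exact h1
  · exact absurd (sub_eq_zero.mp h1) h

lemma entry_eq {K : Type*} [Field K] {p : ℕ} (hp : 0 < p) {ζ : K}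
    (hζ : IsPrimitiveRoot ζ p) (M s : ℕ) :
    (p : K) * ((Dcoef p M (s : ℤ) : ℤ) : K) =
      ∑ j ∈ Finset.range p, (1 - ζ ^ j) ^ M * (ζ⁻¹ ^ j) ^ s := by
  have hζ0 : ζ ≠ 0 := hζ.ne_zero hp.ne'
  have h1 : ∀ j, (1 - ζ ^ j) ^ M * (ζ⁻¹ ^ j) ^ s
      = ∑ m ∈ Finset.range (M + 1),
          ((-1 : K) ^ m * (M.choose m : K)) * (ζ ^ m * ζ⁻¹ ^ s) ^ j := by
    intro j
    have h0 : (1 : K) - ζ ^ j = (-(ζ ^ j)) + 1 := by ring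
    rw [h0, add_pow, Finset.sum_mul]
    refine Finset.sum_congr rfl fun m _ => ?_
    rw [one_pow, mul_one, neg_pow, mul_pow, ← pow_mul, ← pow_mul, ← pow_mul, ← pow_mul,
      Nat.mul_comm j m, Nat.mul_comm j s]
    ring
  rw [Finset.sum_congr rfl fun j _ => h1 j, Finset.sum_comm]
  have h2 : ∀ m : ℕ, ∑ j ∈ Finset.range p, (ζ ^ m * ζ⁻¹ ^ s) ^ j
      = if (m : ZMod p) = ((s : ℕ) : ZMod p) then (p : K) else 0 := by
    intro m
    have hu : (ζ ^ m * ζ⁻¹ ^ s) ^ p = 1 := by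
      rw [mul_pow, ← pow_mul, ← pow_mul, Nat.mul_comm m p, Nat.mul_comm s p,
        pow_mul, pow_mul, hζ.pow_eq_one, inv_pow, hζ.pow_eq_one]
      simp
    have hpm : ∀ a : ℕ, ζ ^ (a % p) = ζ ^ a := by
      intro a
      conv_rhs => rw [← Nat.div_add_mod a p]
      rw [pow_add, pow_mul, hζ.pow_eq_one, one_pow, one_mul]
    have hiff : (ζ ^ m * ζ⁻¹ ^ s = 1) ↔ ((m : ZMod p) = ((s : ℕ) : ZMod p)) := by
      rw [inv_pow, mul_inv_eq_one₀ (pow_ne_zero _ hζ0), ZMod.natCast_eq_natCast_iff']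
      constructor
      · intro h
        exact hζ.pow_inj (Nat.mod_lt _ hp) (Nat.mod_lt _ hp) (by rw [hpm, hpm, h])
      · intro h
        rw [← hpm m, ← hpm s, h]
    by_cases hc : (m : ZMod p) = ((s : ℕ) : ZMod p)
    · rw [if_pos hc]
      have hone : ζ ^ m * ζ⁻¹ ^ s = 1 := hiff.mpr hc
      rw [Finset.sum_congr rfl fun j _ => by rw [hone, one_pow]]
      simp
    · rw [if_neg hc]
      exact root_filter_ne hu fun h => hc (hiff.mp h)
  have h3 : ∀ m : ℕ,
      (∑ j ∈ Finset.range p, ((-1 : K) ^ m * (M.choose m : K)) * (ζ ^ m * ζ⁻¹ ^ s) ^ j)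
      = ((-1 : K) ^ m * (M.choose m : K)) *
          (if (m : ZMod p) = ((s : ℕ) : ZMod p) then (p : K) else 0) := by
    intro m
    rw [← Finset.mul_sum, h2 m]
  rw [Finset.sum_congr rfl fun m _ => h3 m]
  unfold Dcoef
  push_cast
  rw [Finset.mul_sum]
  refine Finset.sum_congr rfl fun m _ => ?_
  split_ifs with h
  · push_cast
    ring
  · simp

lemma det_ne_zero {K : Type*} [Field K] {p : ℕ} (hp : p.Prime) {ζ : K}
    (hζ : IsPrimitiveRoot ζ p) (hpK : (p : K) ≠ 0) (N : ℕ) (hN : 1 ≤ N) :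
    (Matrix.of fun i s : Fin (p - 1) =>
      ((Dcoef p (N + (i : ℕ)) ((s : ℕ) + 1) : ℤ) : K)).det ≠ 0 := by
  have hζ0 : ζ ≠ 0 := hζ.ne_zero hp.pos.ne'
  set x : Fin (p - 1) → K := fun j => 1 - ζ ^ ((j : ℕ) + 1) with hx
  set y : Fin (p - 1) → K := fun j => ζ⁻¹ ^ ((j : ℕ) + 1) with hy
  set A : Matrix (Fin (p - 1)) (Fin (p - 1)) K :=
    Matrix.of fun i j => x j ^ (N + (i : ℕ)) with hA
  set B : Matrix (Fin (p - 1)) (Fin (p - 1)) K :=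
    Matrix.of fun j s => y j ^ ((s : ℕ) + 1) with hB
  have hlt : ∀ j : Fin (p - 1), (j : ℕ) + 1 < p := by
    intro j
    have := j.isLt
    omega
  have hmat : ((p : K) • Matrix.of fun i s : Fin (p - 1) =>
      ((Dcoef p (N + (i : ℕ)) ((s : ℕ) + 1) : ℤ) : K)) = A * B := by
    ext i s
    rw [Matrix.smul_apply, Matrix.mul_apply]
    have hcast : (((s : ℕ) : ℤ) + 1) = (((s : ℕ) + 1 : ℕ) : ℤ) := by push_cast; ring
    simp only [Matrix.of_apply, smul_eq_mul]
    rw [hcast, entry_eq hp.pos hζ (N + (i : ℕ)) ((s : ℕ) + 1)]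
    have hps : Finset.range p = Finset.range ((p - 1) + 1) := by
      congr 1
      omega
    rw [hps, Finset.sum_range_succ']
    have h0 : (1 - ζ ^ 0) ^ (N + (i : ℕ)) * ((ζ⁻¹ ^ 0) ^ ((s : ℕ) + 1)) = 0 := by
      rw [pow_zero, sub_self, zero_pow (by omega : N + (i : ℕ) ≠ 0), zero_mul]
    rw [h0, add_zero, ← Fin.sum_univ_eq_sum_range
      (fun j => (1 - ζ ^ (j + 1)) ^ (N + (i : ℕ)) * (ζ⁻¹ ^ (j + 1)) ^ ((s : ℕ) + 1))]
    rfl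
  have hdet := congrArg Matrix.det hmat
  rw [Matrix.det_smul, Matrix.det_mul, Fintype.card_fin] at hdet
  have hxinj : Function.Injective x := by
    intro j k h
    have : ζ ^ ((j : ℕ) + 1) = ζ ^ ((k : ℕ) + 1) := by
      have := sub_right_injective h
      simpa using this.symm ▸ rfl
    have := hζ.pow_inj (hlt j) (hlt k) this
    exact Fin.ext (by omega)
  have hyinj : Function.Injective y := by
    intro j k h
    have := hζ.inv.pow_inj (hlt j) (hlt k) h
    exact Fin.ext (by omega)
  have hxne : ∀ j, x j ≠ 0 := fun j =>
    sub_ne_zero_of_ne (hζ.pow_ne_one_of_pos_of_lt (Nat.succ_ne_zero _) (hlt j)).symm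
  have hyne : ∀ j, y j ≠ 0 := fun j => pow_ne_zero _ (inv_ne_zero hζ0)
  have hdetA : A.det ≠ 0 := by
    have hA2 : A = Matrix.of fun i j => x j ^ N * (Matrix.vandermonde x).transpose i j := by
      ext i j
      simp [hA, Matrix.vandermonde, pow_add]
    rw [hA2, Matrix.det_mul_row, Matrix.det_transpose]
    exact mul_ne_zero (Finset.prod_ne_zero_iff.mpr fun j _ => pow_ne_zero _ (hxne j))
      (Matrix.det_vandermonde_ne_zero_iff.mpr hxinj)
  have hdetB : B.det ≠ 0 := by
    have hB2 : B = Matrix.of fun j s => y j * Matrix.vandermonde y j s := by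
      ext j s
      simp [hB, Matrix.vandermonde, pow_succ']
    rw [hB2, Matrix.det_mul_column]
    exact mul_ne_zero (Finset.prod_ne_zero_iff.mpr fun j _ => hyne j)
      (Matrix.det_vandermonde_ne_zero_iff.mpr hyinj)
  intro h0
  rw [h0, mul_zero] at hdet
  exact mul_ne_zero hdetA hdetB hdet.symm

/-- The `(p-1)×(p-1)` matrix with entries `D_s(N+i-1)`, `1 ≤ i,s ≤ p-1`, has determinant
`± p^m` for some `m ≥ 0`; in particular its determinant is invertible in `ℤ[1/p]`. -/
theorem stmt_4 (p : ℕ) (hp : p.Prime) (N : ℕ) (hN : 1 ≤ N) :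
    (∃ m : ℕ,
      (Matrix.of fun i s : Fin (p - 1) => Dcoef p (N + (i : ℕ)) ((s : ℕ) + 1)).det = p ^ m ∨
      (Matrix.of fun i s : Fin (p - 1) => Dcoef p (N + (i : ℕ)) ((s : ℕ) + 1)).det = -(p ^ m)) ∧
    IsUnit (algebraMap ℤ (Localization.Away (p : ℤ))
      (Matrix.of fun i s : Fin (p - 1) => Dcoef p (N + (i : ℕ)) ((s : ℕ) + 1)).det) := by
  set Δ : Matrix (Fin (p - 1)) (Fin (p - 1)) ℤ :=
    Matrix.of fun i s : Fin (p - 1) => Dcoef p (N + (i : ℕ)) ((s : ℕ) + 1) with hΔ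
  set D : ℤ := Δ.det with hD
  -- key: no prime other than p divides D
  have key : ∀ q : ℕ, q.Prime → q ≠ p → ¬ ((q : ℤ) ∣ D) := by
    intro q hq hqp hdvd
    haveI : Fact q.Prime := ⟨hq⟩
    have hpq : ¬ q ∣ p := fun h => hqp ((Nat.prime_dvd_prime_iff_eq hq hp).mp h)
    set pp : ℕ+ := ⟨p, hp.pos⟩ with hpp
    haveI : NeZero ((pp : ℕ) : ZMod q) :=
      ⟨by rw [Ne, ZMod.natCast_eq_zero_iff]; exact hpq⟩
    set K := CyclotomicField pp (ZMod q) with hK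
    obtain ⟨ζ, hζ⟩ := IsCyclotomicExtension.exists_isPrimitiveRoot (ZMod q) K
      (Set.mem_singleton (pp : ℕ)) (NeZero.ne _)
    have hζ' : IsPrimitiveRoot ζ p := hζ
    have hpK : ((p : ℕ) : K) ≠ 0 := by
      rw [← map_natCast (algebraMap (ZMod q) K) p]
      intro h
      exact (NeZero.ne ((pp : ℕ) : ZMod q))
        ((algebraMap (ZMod q) K).injective (by rw [map_zero]; exact h))
    have hqK : ((q : ℕ) : K) = 0 := by
      rw [← map_natCast (algebraMap (ZMod q) K) q, ZMod.natCast_self, map_zero]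
    have hD0 : ((D : ℤ) : K) = 0 := by
      obtain ⟨c, hc⟩ := hdvd
      rw [hc]
      push_cast
      change (Int.castRingHom K) ((q : ℤ) * c) = 0
      rw [map_mul, map_natCast, hqK, zero_mul]
    have hD0' : (Matrix.of fun i s : Fin (p - 1) =>
        ((Dcoef p (N + (i : ℕ)) ((s : ℕ) + 1) : ℤ) : K)).det = 0 := by
      have hmap := RingHom.map_det (Int.castRingHom K) Δ
      have heq : ((Int.castRingHom K).mapMatrix Δ) = Matrix.of fun i s : Fin (p - 1) =>
          ((Dcoef p (N + (i : ℕ)) ((s : ℕ) + 1) : ℤ) : K) := by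
        ext i s
        simp [hΔ]
      rw [heq] at hmap
      rw [← hmap]
      exact hD0
    exact det_ne_zero hp hζ' hpK N hN hD0' 
  -- D ≠ 0
  have hq0 : ∃ q : ℕ, q.Prime ∧ q ≠ p := by
    rcases Nat.exists_infinite_primes (p + 1) with ⟨q, hq1, hq2⟩
    exact ⟨q, hq2, by omega⟩
  obtain ⟨q0, hq0p, hq0ne⟩ := hq0
  have hDne : D ≠ 0 := by
    intro h
    exact key q0 hq0p hq0ne (h ▸ dvd_zero _)
  -- natAbs is a power of p
  have hna : D.natAbs ≠ 0 := fun h => hDne (Int.natAbs_eq_zero.mp h)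
  have huniq : ∀ {d : ℕ}, d.Prime → d ∣ D.natAbs → d = p := by
    intro d hd hdvd
    by_contra hne
    exact key d hd hne (dvd_trans (Int.natCast_dvd_natCast.mpr hdvd) (Int.natAbs_dvd.mpr dvd_rfl))
  obtain hpow := Nat.eq_prime_pow_of_unique_prime_dvd hna huniq
  set k := D.natAbs.primeFactorsList.length
  have hunit : IsUnit (algebraMap ℤ (Localization.Away (p : ℤ)) (p : ℤ)) :=
    IsLocalization.Away.algebraMap_isUnit (p : ℤ)
  rcases Int.natAbs_eq D with h | h
  · have hDeq : D = (p : ℤ) ^ k := by rw [h, hpow]; push_cast; ring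
    refine ⟨⟨k, Or.inl hDeq⟩, ?_⟩
    rw [hDeq, map_pow]
    exact hunit.pow k
  · have hDeq : D = -((p : ℤ) ^ k) := by rw [h, hpow]; push_cast; ring
    refine ⟨⟨k, Or.inr hDeq⟩, ?_⟩
    rw [hDeq, map_neg, map_pow]
    exact (hunit.pow k).neg
end

section
/- Let $q \geq 2$ and $n \geq 3$ be integers. Then $(q^n - q)/(q - 1) > \binom{n + q - 2}{n - 1}$. -/
/-!
Writing `n = m + 3`, the left-hand side is `q * (1 + q + ⋯ + q^(m+1))` and the right-hand side is
`C(m + q + 1, m + 2)`. Passing from `C(k + q - 1, k)` to `C(k + q, k + 1)` multiplies by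
`(k + q) / (k + 1) ≤ q`, while passing from `q * (1 + ⋯ + q^k)` to `q * (1 + ⋯ + q^(k+1))`
multiplies by `q` and then adds `q > 0`. Starting from the equality `C(q, 1) = q` at `k = 1`,
the inequality is thus non-strict at every step and becomes strict from the second step on.
-/

open Finset

lemma Nat.choose_succ_succ_le_mul (n k : ℕ) :
    (n + 1).choose (k + 1) ≤ (n + 1 - k) * n.choose k := by
  rcases le_or_gt k n with hkn | hnk
  · obtain ⟨j, rfl⟩ := Nat.exists_eq_add_of_le hkn
    have hrec := Nat.add_one_mul_choose_eq (k + j) k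
    refine Nat.le_of_mul_le_mul_right (c := k + 1) ?_ k.succ_pos
    calc (k + j + 1).choose (k + 1) * (k + 1) = (k + j + 1) * (k + j).choose k := hrec.symm
      _ ≤ (k + j + 1 - k) * (k + j).choose k * (k + 1) := by
        rw [show k + j + 1 - k = j + 1 by omega, mul_right_comm]
        exact Nat.mul_le_mul_right _ (by nlinarith)
  · simp [Nat.choose_eq_zero_of_lt (show n + 1 < k + 1 by omega)]

lemma Nat.choose_add_two_le_mul_choose (m q : ℕ) :
    (m + 1 + q).choose (m + 2) ≤ q * (m + q).choose (m + 1) := by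
  simpa [show m + q + 1 - (m + 1) = q by omega, add_right_comm m 1 q]
    using Nat.choose_succ_succ_le_mul (m + q) (m + 1)

lemma Nat.choose_add_succ_le_mul_geom_sum (q m : ℕ) :
    (m + q).choose (m + 1) ≤ q * ∑ i ∈ range (m + 1), q ^ i := by
  induction m with
  | zero => simp
  | succ m ih =>
    calc (m + 1 + q).choose (m + 2) ≤ q * (m + q).choose (m + 1) :=
          Nat.choose_add_two_le_mul_choose m q
      _ ≤ q * (q * ∑ i ∈ range (m + 1), q ^ i) := Nat.mul_le_mul_left q ih
      _ ≤ q * ∑ i ∈ range (m + 2), q ^ i := by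
        rw [geom_sum_succ (n := m + 1)]
        exact Nat.mul_le_mul_left q (Nat.le_succ _)

lemma Nat.choose_add_two_lt_mul_geom_sum {q : ℕ} (hq : 0 < q) (m : ℕ) :
    (m + 1 + q).choose (m + 2) < q * ∑ i ∈ range (m + 2), q ^ i :=
  calc (m + 1 + q).choose (m + 2) ≤ q * (m + q).choose (m + 1) :=
        Nat.choose_add_two_le_mul_choose m q
    _ ≤ q * (q * ∑ i ∈ range (m + 1), q ^ i) :=
        Nat.mul_le_mul_left q (Nat.choose_add_succ_le_mul_geom_sum q m)
    _ < q * ∑ i ∈ range (m + 2), q ^ i := by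
        rw [geom_sum_succ (n := m + 1)]
        exact Nat.mul_lt_mul_of_pos_left (Nat.lt_succ_self _) hq

lemma Nat.pow_succ_sub_div_pred {q : ℕ} (hq : 1 < q) (k : ℕ) :
    (q ^ (k + 1) - q) / (q - 1) = q * ∑ i ∈ range k, q ^ i := by
  have hgeom : q ^ (k + 1) - q = (q - 1) * (q * ∑ i ∈ range k, q ^ i) := by
    rw [mul_left_comm, mul_comm (q - 1), geom_sum_mul_of_one_le hq.le, Nat.mul_sub, pow_succ',
      mul_one]
  rw [hgeom, Nat.mul_div_cancel_left _ (by omega)]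

/-- For `q ≥ 2`, `n ≥ 3`: `(q^n - q)/(q-1) > C(n+q-2, n-1)`. -/
theorem stmt_8 (q n : ℕ) (hq : 2 ≤ q) (hn : 3 ≤ n) :
    (q ^ n - q) / (q - 1) > Nat.choose (n + q - 2) (n - 1) := by
  obtain ⟨m, rfl⟩ : ∃ m, n = m + 3 := ⟨n - 3, by omega⟩
  rw [Nat.pow_succ_sub_div_pred hq (m + 2), show m + 3 + q - 2 = m + 1 + q by omega]
  exact Nat.choose_add_two_lt_mul_geom_sum (by omega) m
end

section
/- Let $F$ be a division ring, $V$ a left $F$-vector space, and $L_0, L_1$ subspaces of $V$ with $\dim(L_0/(L_0 \cap L_1)) = \dim(L_1/(L_0 \cap L_1)) = c$ finite. Then there exists a chain of subspaces $L_0 = L'_0, L'_1, \dots, L'_c = L_1$, all containing $L_0 \cap L_1$, such that for each $1 \leq i \leq c$, the intersection $L'_{i-1} \cap L'_i$ has codimension $1$ in both $L'_{i-1}$ and $L'_i$, and each $L'_i$ satisfies $\dim L'_i = \dim L_0$ and $\mathrm{codim}_V L'_i = \mathrm{codim}_V L_0$. -/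
/-- The dimension of `A/(A ∩ B)` for submodules `A B ⊆ V`. -/
noncomputable def quotRank {F V : Type*} [DivisionRing F] [AddCommGroup V] [Module F V]
    (A B : Submodule F V) : Cardinal :=
  Module.rank F (↥A ⧸ Submodule.comap A.subtype B)

section Aux

variable {F V : Type*} [DivisionRing F] [AddCommGroup V] [Module F V]

lemma quotRank_eq (A B : Submodule F V) :
    quotRank A B = Module.rank F ↥(A.map B.mkQ) := by
  have h : Submodule.comap A.subtype B = LinearMap.ker (B.mkQ ∘ₗ A.subtype) := by
    rw [LinearMap.ker_comp, Submodule.ker_mkQ]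
  have h2 : A.map B.mkQ = LinearMap.range (B.mkQ ∘ₗ A.subtype) := by
    rw [LinearMap.range_comp, Submodule.range_subtype]
  rw [quotRank, h, h2]
  exact (LinearMap.quotKerEquivRange _).rank_eq

lemma le_comap_mkQ (W : Submodule F V) (A' : Submodule F (V ⧸ W)) :
    W ≤ Submodule.comap W.mkQ A' := by
  intro x hx
  have h0 : W.mkQ x = 0 := by rwa [Submodule.mkQ_apply, Submodule.Quotient.mk_eq_zero]
  rw [Submodule.mem_comap, h0]
  exact A'.zero_mem

lemma quotRank_comap (W : Submodule F V) (A' B' : Submodule F (V ⧸ W)) :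
    quotRank (Submodule.comap W.mkQ A') (Submodule.comap W.mkQ B') = quotRank A' B' := by
  rw [quotRank_eq, quotRank_eq]
  set B := Submodule.comap W.mkQ B' with hB
  have hle : B ≤ LinearMap.ker (B'.mkQ ∘ₗ W.mkQ) := by
    rw [LinearMap.ker_comp, Submodule.ker_mkQ]
  have hker : LinearMap.ker (B'.mkQ ∘ₗ W.mkQ) ≤ B := by
    rw [LinearMap.ker_comp, Submodule.ker_mkQ]
  set ψ := B.liftQ (B'.mkQ ∘ₗ W.mkQ) hle with hψ
  have hinj : Function.Injective ψ := by
    rw [← LinearMap.ker_eq_bot]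
    exact Submodule.ker_liftQ_eq_bot _ _ _ hker
  have key : Submodule.map ψ (Submodule.map B.mkQ (Submodule.comap W.mkQ A'))
      = Submodule.map B'.mkQ A' := by
    rw [← Submodule.map_comp, Submodule.liftQ_mkQ, Submodule.map_comp,
      Submodule.map_comap_eq_of_surjective (Submodule.mkQ_surjective W)]
  rw [← key]
  exact (Submodule.equivMapOfInjective ψ hinj _).rank_eq

lemma rank_comap_mkQ (W : Submodule F V) (A' : Submodule F (V ⧸ W)) :
    Module.rank F ↥(Submodule.comap W.mkQ A')
      = Module.rank F ↥A' + Module.rank F ↥W := by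
  set A := Submodule.comap W.mkQ A' with hA
  have hWA : W ≤ A := le_comap_mkQ W A'
  have h1 := Submodule.rank_quotient_add_rank (Submodule.comap A.subtype W)
  have h2 : Module.rank F (↥A ⧸ Submodule.comap A.subtype W) = Module.rank F ↥A' := by
    have h := quotRank_eq A W
    rw [quotRank] at h
    rw [h, hA, Submodule.map_comap_eq_of_surjective (Submodule.mkQ_surjective W)]
  have h3 : Module.rank F ↥(Submodule.comap A.subtype W) = Module.rank F ↥W :=
    (Submodule.comapSubtypeEquivOfLe hWA).rank_eq
  rw [← h1, h2, h3]

lemma rank_quot_comap (W : Submodule F V) (A' : Submodule F (V ⧸ W)) :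
    Module.rank F (V ⧸ Submodule.comap W.mkQ A')
      = Module.rank F ((V ⧸ W) ⧸ A') := by
  have h := (Submodule.quotientQuotientEquivQuotient W (Submodule.comap W.mkQ A')
    (le_comap_mkQ W A')).rank_eq
  rw [Submodule.map_comap_eq_of_surjective (Submodule.mkQ_surjective W)] at h
  exact h.symm

lemma rank_span_singleton' (x : V) (hx : x ≠ 0) :
    Module.rank F ↥(Submodule.span F {x}) = 1 := by
  haveI := FiniteDimensional.span_of_finite F (Set.finite_singleton x)
  rw [← Module.finrank_eq_rank, finrank_span_singleton hx, Nat.cast_one]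

lemma map_mkQ_rank_one {ι : Type*} {u : ι → V} (hu : LinearIndependent F u)
    {D : Set ι} {a b : ι} (haD : a ∉ D) (hab : a ≠ b) :
    Module.rank F
      ↥((Submodule.span F (u '' insert a D)).map (Submodule.span F (u '' insert b D)).mkQ)
      = 1 := by
  set N := Submodule.span F (u '' insert b D) with hN
  have himg : (Submodule.span F (u '' insert a D)).map N.mkQ
      = Submodule.span F {N.mkQ (u a)} := by
    rw [Submodule.map_span, Set.image_insert_eq, Set.image_insert_eq, Submodule.span_insert]
    have hz : Submodule.span F (N.mkQ '' (u '' D)) = ⊥ := by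
      rw [Submodule.span_eq_bot]
      rintro _ ⟨y, hy, rfl⟩
      rw [Submodule.mkQ_apply, Submodule.Quotient.mk_eq_zero]
      exact Submodule.subset_span (Set.image_mono (f := u) (Set.subset_insert b D) hy)
    rw [hz, sup_bot_eq]
  rw [himg]
  apply rank_span_singleton'
  rw [Submodule.mkQ_apply, Ne, Submodule.Quotient.mk_eq_zero]
  exact hu.notMem_span_image (by simp [haD, hab])

lemma chain_aux {c : ℕ} (e f : Fin c → V) (hu : LinearIndependent F (Sum.elim e f)) :
    ∃ g : Fin (c + 1) → Submodule F V,
      g 0 = Submodule.span F (Set.range e) ∧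
      g (Fin.last c) = Submodule.span F (Set.range f) ∧
      (∀ i, Module.rank F (g i) = c) ∧
      (∀ i : Fin c,
        Module.rank F ↥((g i.castSucc).map (g i.succ).mkQ) = 1 ∧
        Module.rank F ↥((g i.succ).map (g i.castSucc).mkQ) = 1) := by
  set u := Sum.elim e f with hu_def
  set T : Fin (c + 1) → Set (Fin c ⊕ Fin c) :=
    fun i => Sum.inl '' {j | (i : ℕ) ≤ (j : ℕ)} ∪ Sum.inr '' {j | (j : ℕ) < (i : ℕ)} with hT
  refine ⟨fun i => Submodule.span F (u '' T i), ?_, ?_, ?_, ?_⟩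
  · have hT0 : T 0 = Set.range Sum.inl := by
      ext x; rcases x with j | j <;> simp [hT]
    show Submodule.span F (u '' T 0) = Submodule.span F (Set.range e)
    rw [hT0, ← Set.range_comp]
    rfl
  · have hTl : T (Fin.last c) = Set.range Sum.inr := by
      ext x
      rcases x with j | j
      · have hj := j.isLt
        simp only [hT, Fin.val_last, Set.mem_union, Set.mem_image, Set.mem_setOf_eq,
          Set.mem_range]
        constructor
        · rintro (⟨a, ha, h⟩ | ⟨a, ha, h⟩) <;>
            first
            | (cases h; omega)
            | (exact absurd h (by simp))
        · rintro ⟨a, h⟩; exact absurd h (by simp)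
      · have hj := j.isLt
        simp [hT, hj]
    show Submodule.span F (u '' T (Fin.last c)) = Submodule.span F (Set.range f)
    rw [hTl, ← Set.range_comp]
    rfl
  · intro i
    set σ : Fin c → Fin c ⊕ Fin c :=
      fun j => if (j : ℕ) < (i : ℕ) then Sum.inr j else Sum.inl j with hσ
    have hσinj : Function.Injective σ := by
      apply Function.LeftInverse.injective (g := Sum.elim id id)
      intro j
      by_cases h : (j : ℕ) < (i : ℕ) <;> simp [hσ, h]
    have hrange : T i = Set.range σ := by
      ext x
      constructor
      · intro hx
        rcases x with j | j
        · refine ⟨j, ?_⟩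
          have hij : (i : ℕ) ≤ (j : ℕ) := by simpa [hT] using hx
          simp only [hσ]
          rw [if_neg (Nat.not_lt.mpr hij)]
        · refine ⟨j, ?_⟩
          have hij : (j : ℕ) < (i : ℕ) := by simpa [hT] using hx
          simp only [hσ]
          rw [if_pos hij]
      · rintro ⟨a, rfl⟩
        by_cases h : (a : ℕ) < (i : ℕ)
        · have : σ a = Sum.inr a := by simp only [hσ]; rw [if_pos h]
          rw [this]
          simp [hT, h]
        · have : σ a = Sum.inl a := by simp only [hσ]; rw [if_neg h]
          rw [this]
          simp only [hT, Set.mem_union, Set.mem_image, Set.mem_setOf_eq]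
          exact Or.inl ⟨a, Nat.le_of_not_lt h, rfl⟩
    have hcomp : u '' T i = Set.range (u ∘ σ) := by
      rw [hrange, Set.range_comp]
    show Module.rank F ↥(Submodule.span F (u '' T i)) = (c : Cardinal)
    rw [hcomp, rank_span (hu.comp σ hσinj)]
    have hinj2 : Function.Injective (u ∘ σ) := hu.injective.comp hσinj
    simpa using Cardinal.mk_range_eq_of_injective hinj2
  · intro i
    set D : Set (Fin c ⊕ Fin c) :=
      Sum.inl '' {j | (i : ℕ) < (j : ℕ)} ∪ Sum.inr '' {j | (j : ℕ) < (i : ℕ)} with hD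
    have hTc : T i.castSucc = insert (Sum.inl i) D := by
      ext x
      rcases x with j | j
      · simp [hT, hD]
        simp only [Fin.ext_iff, Fin.le_def, Fin.lt_def]
        omega
      · simp [hT, hD]
    have hTs : T i.succ = insert (Sum.inr i) D := by
      ext x
      rcases x with j | j
      · simp [hT, hD]
      · simp [hT, hD]
        simp only [Fin.ext_iff, Fin.le_def, Fin.lt_def]
        omega
    have h1 : Sum.inl i ∉ D := by simp [hD]
    have h2 : Sum.inr i ∉ D := by simp [hD]
    constructor
    · show Module.rank F
        ↥((Submodule.span F (u '' T i.castSucc)).map (Submodule.span F (u '' T i.succ)).mkQ) = 1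
      rw [hTc, hTs]
      exact map_mkQ_rank_one hu h1 (by simp)
    · show Module.rank F
        ↥((Submodule.span F (u '' T i.succ)).map (Submodule.span F (u '' T i.castSucc)).mkQ) = 1
      rw [hTs, hTc]
      exact map_mkQ_rank_one hu h2 (by simp)

end Aux

/-- If `dim L₀/(L₀∩L₁) = dim L₁/(L₀∩L₁) = c < ∞`, there is a chain
`L₀ = L'₀, …, L'_c = L₁` of subspaces containing `L₀ ∩ L₁`, each of the same dimension and
codimension as `L₀`, with consecutive intersections of codimension `1` on both sides. -/
theorem stmt_10 (F V : Type*) [DivisionRing F] [AddCommGroup V] [Module F V]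
    (L₀ L₁ : Submodule F V) (c : ℕ)
    (h₀ : quotRank L₀ L₁ = c) (h₁ : quotRank L₁ L₀ = c) :
    ∃ L' : Fin (c + 1) → Submodule F V,
      L' 0 = L₀ ∧ L' (Fin.last c) = L₁ ∧
      (∀ i, L₀ ⊓ L₁ ≤ L' i) ∧
      (∀ i : Fin c, quotRank (L' i.castSucc) (L' i.succ) = 1 ∧
        quotRank (L' i.succ) (L' i.castSucc) = 1) ∧
      (∀ i, Module.rank F (L' i) = Module.rank F L₀ ∧
        Module.rank F (V ⧸ L' i) = Module.rank F (V ⧸ L₀)) := by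
  set W := L₀ ⊓ L₁ with hW
  have hWL₀ : W ≤ L₀ := inf_le_left
  have hWL₁ : W ≤ L₁ := inf_le_right
  set E := Submodule.map W.mkQ L₀ with hE_def
  set G := Submodule.map W.mkQ L₁ with hG_def
  have hc₀ : Submodule.comap L₀.subtype W = Submodule.comap L₀.subtype L₁ := by
    rw [hW, Submodule.comap_inf, Submodule.comap_subtype_self, top_inf_eq]
  have hc₁ : Submodule.comap L₁.subtype W = Submodule.comap L₁.subtype L₀ := by
    rw [hW, Submodule.comap_inf, Submodule.comap_subtype_self, inf_top_eq]
  have hrE : Module.rank F ↥E = (c : Cardinal) := by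
    calc Module.rank F ↥E = quotRank L₀ W := (quotRank_eq L₀ W).symm
      _ = quotRank L₀ L₁ := by unfold quotRank; rw [hc₀]
      _ = c := h₀
  have hrG : Module.rank F ↥G = (c : Cardinal) := by
    calc Module.rank F ↥G = quotRank L₁ W := (quotRank_eq L₁ W).symm
      _ = quotRank L₁ L₀ := by unfold quotRank; rw [hc₁]
      _ = c := h₁
  haveI : Module.Finite F ↥E := Module.finite_of_rank_eq_nat hrE
  haveI : Module.Finite F ↥G := Module.finite_of_rank_eq_nat hrG
  let bE : Module.Basis (Fin c) F ↥E := Module.finBasisOfFinrankEq F ↥E (Module.finrank_eq_of_rank_eq hrE)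
  let bG : Module.Basis (Fin c) F ↥G := Module.finBasisOfFinrankEq F ↥G (Module.finrank_eq_of_rank_eq hrG)
  let e : Fin c → V ⧸ W := fun j => ((bE j : ↥E) : V ⧸ W)
  let f : Fin c → V ⧸ W := fun j => ((bG j : ↥G) : V ⧸ W)
  have heli : LinearIndependent F e := bE.linearIndependent.map' E.subtype (Submodule.ker_subtype E)
  have hfli : LinearIndependent F f := bG.linearIndependent.map' G.subtype (Submodule.ker_subtype G)
  have hespan : Submodule.span F (Set.range e) = E := by
    have h : Set.range e = E.subtype '' Set.range ⇑bE := Set.range_comp E.subtype ⇑bE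
    rw [h, ← Submodule.map_span, Module.Basis.span_eq, Submodule.map_subtype_top]
  have hfspan : Submodule.span F (Set.range f) = G := by
    have h : Set.range f = G.subtype '' Set.range ⇑bG := Set.range_comp G.subtype ⇑bG
    rw [h, ← Submodule.map_span, Module.Basis.span_eq, Submodule.map_subtype_top]
  have hEG : E ⊓ G = ⊥ := by
    rw [eq_bot_iff]
    intro x hx
    rw [Submodule.mem_inf] at hx
    obtain ⟨hxE, hxG⟩ := hx
    rw [Submodule.mem_bot]
    rw [hE_def, Submodule.mem_map] at hxE
    rw [hG_def, Submodule.mem_map] at hxG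
    obtain ⟨a, haL₀, rfl⟩ := hxE
    obtain ⟨b, hbL₁, hba⟩ := hxG
    have hba' : b - a ∈ W := by
      rwa [Submodule.mkQ_apply, Submodule.mkQ_apply, Submodule.Quotient.eq] at hba
    have haL₁ : a ∈ L₁ := by
      have h := Submodule.sub_mem L₁ hbL₁ (hWL₁ hba')
      simpa using h
    have haW : a ∈ W := Submodule.mem_inf.mpr ⟨haL₀, haL₁⟩
    rw [Submodule.mkQ_apply, Submodule.Quotient.mk_eq_zero]
    exact haW
  have hu : LinearIndependent F (Sum.elim e f) := by
    refine heli.sum_type hfli ?_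
    rw [hespan, hfspan]
    exact disjoint_iff.mpr hEG
  obtain ⟨g, hg0, hgl, hgrank, hgcons⟩ := chain_aux e f hu
  have hL0 : Submodule.comap W.mkQ (g 0) = L₀ := by
    rw [hg0, hespan, hE_def, Submodule.comap_map_eq, Submodule.ker_mkQ, sup_eq_left.mpr hWL₀]
  have hL1 : Submodule.comap W.mkQ (g (Fin.last c)) = L₁ := by
    rw [hgl, hfspan, hG_def, Submodule.comap_map_eq, Submodule.ker_mkQ, sup_eq_left.mpr hWL₁]
  refine ⟨fun i => Submodule.comap W.mkQ (g i), hL0, hL1, ?_, ?_, ?_⟩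
  · intro i
    exact le_comap_mkQ W (g i)
  · intro i
    constructor
    · rw [quotRank_comap, quotRank_eq]
      exact (hgcons i).1
    · rw [quotRank_comap, quotRank_eq]
      exact (hgcons i).2
  · intro i
    constructor
    · rw [← hL0, rank_comap_mkQ, rank_comap_mkQ, hgrank i, hgrank 0]
    · rw [← hL0, rank_quot_comap, rank_quot_comap]
      have h1 := Submodule.rank_quotient_add_rank (g i)
      have h2 := Submodule.rank_quotient_add_rank (g 0)
      rw [hgrank i] at h1
      rw [hgrank 0] at h2
      exact Cardinal.eq_of_add_eq_add_right (h1.trans h2.symm) (Cardinal.nat_lt_aleph0 c)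
end

section
/- Let $K$ be a field and $R = \bigcup_{N \geq 1} K[t^{1/N}, t^{-1}]$ the group algebra of $(\mathbb{Q}, +)$ over $K$ (with $t^a$ for $a \in \mathbb{Q}$ as basis). Let $J \subset R$ be the ideal generated by $t^{1/N} - 1$ for all $N \geq 1$ (the augmentation ideal). If $\mathrm{char}(K) = 0$ then $J^n / J^{n+1}$ is a one-dimensional $K$-vector space for every $n \geq 1$. -/
open AddMonoidAlgebra PowerSeries

namespace Stmt12

variable (K : Type*) [Field K] [CharZero K]

/-- The group-like elements as units. -/
noncomputable def U : Multiplicative ℚ →* (AddMonoidAlgebra K ℚ)ˣ where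
  toFun a :=
    { val := AddMonoidAlgebra.single (Multiplicative.toAdd a) (1 : K)
      inv := AddMonoidAlgebra.single (-(Multiplicative.toAdd a)) (1 : K)
      val_inv := by
        rw [AddMonoidAlgebra.single_mul_single]
        simp [AddMonoidAlgebra.one_def]
      inv_val := by
        rw [AddMonoidAlgebra.single_mul_single]
        simp [AddMonoidAlgebra.one_def] }
  map_one' := by
    apply Units.ext
    simp [AddMonoidAlgebra.one_def]
  map_mul' a b := by
    apply Units.ext
    simp [AddMonoidAlgebra.single_mul_single]

@[simp] lemma U_val (a : ℚ) :
    ((U K (Multiplicative.ofAdd a) : (AddMonoidAlgebra K ℚ)ˣ) : AddMonoidAlgebra K ℚ)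
      = AddMonoidAlgebra.single a (1 : K) := rfl

theorem unit_sub_one_dvd {R : Type*} [CommRing R] (v : Rˣ) (m : ℤ) :
    (v : R) - 1 ∣ ((v ^ m : Rˣ) : R) - 1 := by
  obtain ⟨k, rfl | rfl⟩ := Int.eq_nat_or_neg m
  · rw [zpow_natCast, Units.val_pow_eq_pow_val]
    simpa using sub_dvd_pow_sub_pow (v : R) 1 k
  · have h1 : ((v ^ (-(k : ℤ)) : Rˣ) : R) * ((v ^ (k : ℤ) : Rˣ) : R) = 1 := by
      rw [← Units.val_mul, ← zpow_add]
      simp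
    have h2 : ((v ^ (-(k : ℤ)) : Rˣ) : R) - 1
        = -((v ^ (-(k : ℤ)) : Rˣ) : R) * (((v ^ (k : ℤ) : Rˣ) : R) - 1) := by
      rw [neg_mul, mul_sub, h1, mul_one, neg_sub]
    rw [h2]
    exact Dvd.dvd.mul_left (by
      rw [zpow_natCast, Units.val_pow_eq_pow_val]
      simpa using sub_dvd_pow_sub_pow (v : R) 1 k) _

variable (J : Ideal (AddMonoidAlgebra K ℚ))
variable (hJ : J = Ideal.span {x : AddMonoidAlgebra K ℚ |
      ∃ N : ℕ, 0 < N ∧ x = AddMonoidAlgebra.single ((N : ℚ)⁻¹) 1 - 1})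

include hJ

theorem sub_one_mem (a : ℚ) : AddMonoidAlgebra.single a (1 : K) - 1 ∈ J := by
  have hgen : AddMonoidAlgebra.single ((a.den : ℚ)⁻¹) (1 : K) - 1 ∈ J := by
    rw [hJ]
    exact Ideal.subset_span ⟨a.den, a.pos, rfl⟩
  have ha : a.num • ((a.den : ℚ)⁻¹) = a := by
    rw [zsmul_eq_mul, ← div_eq_mul_inv, Rat.num_div_den]
  have hu : AddMonoidAlgebra.single a (1 : K)
      = ((U K (Multiplicative.ofAdd ((a.den : ℚ)⁻¹)) ^ a.num :
          (AddMonoidAlgebra K ℚ)ˣ) : AddMonoidAlgebra K ℚ) := by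
    rw [← map_zpow, ← ofAdd_zsmul, U_val, ha]
  obtain ⟨c, hc⟩ := unit_sub_one_dvd (U K (Multiplicative.ofAdd ((a.den : ℚ)⁻¹))) a.num
  rw [hu]
  rw [U_val] at hc
  rw [hc]
  exact Ideal.mul_mem_right _ _ hgen

theorem key_congr (a : ℚ) :
    AddMonoidAlgebra.single a (1 : K) - 1
      - (a : K) • (AddMonoidAlgebra.single (1 : ℚ) (1 : K) - 1) ∈ J ^ 2 := by
  set W := Submodule.restrictScalars K (J ^ 2 : Ideal (AddMonoidAlgebra K ℚ)) with hW
  have hmul : ∀ b c : ℚ,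
      (AddMonoidAlgebra.single (b + c) (1 : K) - 1)
        - (AddMonoidAlgebra.single b (1 : K) - 1)
        - (AddMonoidAlgebra.single c (1 : K) - 1)
      = (AddMonoidAlgebra.single b (1 : K) - 1) * (AddMonoidAlgebra.single c (1 : K) - 1) := by
    intro b c
    have := AddMonoidAlgebra.single_mul_single (R := K) (m₁ := b) (m₂ := c)
      (r₁ := (1 : K)) (r₂ := (1 : K))
    rw [sub_mul, mul_sub, mul_sub, this, one_mul, mul_one]
    ring
  let φ : ℚ →+ (AddMonoidAlgebra K ℚ ⧸ W) :=
    { toFun := fun b => W.mkQ (AddMonoidAlgebra.single b (1 : K) - 1)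
      map_zero' := by
        simp [AddMonoidAlgebra.one_def]
      map_add' := by
        intro b c
        have hmem : (AddMonoidAlgebra.single (b + c) (1 : K) - 1)
            - (AddMonoidAlgebra.single b (1 : K) - 1)
            - (AddMonoidAlgebra.single c (1 : K) - 1) ∈ W := by
          rw [hmul b c]
          show _ ∈ (J ^ 2 : Ideal (AddMonoidAlgebra K ℚ))
          rw [sq]
          exact Ideal.mul_mem_mul (sub_one_mem K J hJ b) (sub_one_mem K J hJ c)
        show W.mkQ (AddMonoidAlgebra.single (b + c) (1 : K) - 1)
          = W.mkQ (AddMonoidAlgebra.single b (1 : K) - 1)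
            + W.mkQ (AddMonoidAlgebra.single c (1 : K) - 1)
        rw [← map_add, Submodule.mkQ_apply, Submodule.mkQ_apply, Submodule.Quotient.eq]
        have harr : (AddMonoidAlgebra.single (b + c) (1 : K) - 1)
            - ((AddMonoidAlgebra.single b (1 : K) - 1) + (AddMonoidAlgebra.single c (1 : K) - 1))
            = (AddMonoidAlgebra.single (b + c) (1 : K) - 1)
            - (AddMonoidAlgebra.single b (1 : K) - 1)
            - (AddMonoidAlgebra.single c (1 : K) - 1) := by ring
        rw [harr]
        exact hmem }
  have hφ : ∀ b : ℚ, φ b = W.mkQ (AddMonoidAlgebra.single b (1 : K) - 1) := fun _ => rfl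
  -- φ a = (a : K) • φ 1
  have hden : (a.den : ℚ) * a = (a.num : ℚ) := by
    have h := Rat.num_div_den a
    field_simp at h ⊢
    linarith
  have h1 : (a.den : K) • φ a = (a.num : K) • φ 1 := by
    rw [Nat.cast_smul_eq_nsmul, Int.cast_smul_eq_zsmul, ← map_nsmul, ← map_zsmul]
    congr 1
    rw [nsmul_eq_mul, zsmul_eq_mul, mul_one, hden]
  have hdenK : (a.den : K) ≠ 0 := Nat.cast_ne_zero.mpr a.den_nz
  have h2 : φ a = (a : K) • φ 1 := by
    have := congrArg (fun x => (a.den : K)⁻¹ • x) h1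
    simp only [smul_smul, inv_mul_cancel₀ hdenK, one_smul] at this
    rw [this, Rat.cast_def, div_eq_inv_mul]
  have h4 : AddMonoidAlgebra.single a (1 : K) - 1
      - (a : K) • (AddMonoidAlgebra.single (1 : ℚ) (1 : K) - 1) ∈ W := by
    rw [← Submodule.Quotient.mk_eq_zero W]
    have hmk : (Submodule.Quotient.mk (AddMonoidAlgebra.single a (1 : K) - 1
        - (a : K) • (AddMonoidAlgebra.single (1 : ℚ) (1 : K) - 1)) :
          AddMonoidAlgebra K ℚ ⧸ W)
        = W.mkQ (AddMonoidAlgebra.single a (1 : K) - 1)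
          - (a : K) • W.mkQ (AddMonoidAlgebra.single (1 : ℚ) (1 : K) - 1) := by
      rw [← map_smul, ← map_sub]
      rfl
    rw [hmk, ← hφ, ← hφ, h2, sub_self]
  rwa [Submodule.restrictScalars_mem] at h4

/-- The K-span of all `t^a - 1`. -/
noncomputable def M : Submodule K (AddMonoidAlgebra K ℚ) :=
  Submodule.span K {x : AddMonoidAlgebra K ℚ | ∃ a : ℚ, x = AddMonoidAlgebra.single a (1 : K) - 1}

omit hJ

theorem single_mul_mem_M (a : ℚ) (x : AddMonoidAlgebra K ℚ) (hx : x ∈ M K) :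
    AddMonoidAlgebra.single a (1 : K) * x ∈ M K := by
  induction hx using Submodule.span_induction with
  | mem y hy =>
    obtain ⟨c, rfl⟩ := hy
    have : AddMonoidAlgebra.single a (1 : K) * (AddMonoidAlgebra.single c (1 : K) - 1)
        = (AddMonoidAlgebra.single (a + c) (1 : K) - 1)
          - (AddMonoidAlgebra.single a (1 : K) - 1) := by
      rw [mul_sub, AddMonoidAlgebra.single_mul_single, mul_one, mul_one]
      ring
    rw [this]
    exact Submodule.sub_mem _ (Submodule.subset_span ⟨a + c, rfl⟩)
      (Submodule.subset_span ⟨a, rfl⟩)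
  | zero => simpa using Submodule.zero_mem (M K)
  | add y z _ _ hy hz => rw [mul_add]; exact Submodule.add_mem _ hy hz
  | smul c y _ hy => rw [mul_smul_comm]; exact Submodule.smul_mem _ _ hy

theorem mul_mem_M (r x : AddMonoidAlgebra K ℚ) (hx : x ∈ M K) : r * x ∈ M K := by
  induction r using AddMonoidAlgebra.induction with
  | zero => simpa using Submodule.zero_mem (M K)
  | single_add a b f _ _ hf =>
    have hsingle : (AddMonoidAlgebra.single a b : AddMonoidAlgebra K ℚ)
        = b • AddMonoidAlgebra.single a (1 : K) := by
      rw [AddMonoidAlgebra.smul_single', mul_one]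
    rw [add_mul, hsingle, smul_mul_assoc]
    exact Submodule.add_mem _ (Submodule.smul_mem _ _ (single_mul_mem_M K a x hx)) hf

include hJ

theorem J_le_M : ∀ x ∈ J, x ∈ M K := by
  intro x hx
  rw [hJ] at hx
  induction hx using Submodule.span_induction with
  | mem y hy =>
    obtain ⟨N, hN, rfl⟩ := hy
    exact Submodule.subset_span ⟨(N : ℚ)⁻¹, rfl⟩
  | zero => exact Submodule.zero_mem _
  | add y z _ _ hy hz => exact Submodule.add_mem _ hy hz
  | smul r y _ hy => rw [smul_eq_mul]; exact mul_mem_M K r y hy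

theorem base_case :
    ∀ x ∈ J, x ∈ Submodule.restrictScalars K (J ^ 2 : Ideal (AddMonoidAlgebra K ℚ))
      ⊔ (K ∙ (AddMonoidAlgebra.single (1 : ℚ) (1 : K) - 1)) := by
  intro x hx
  have hM : x ∈ M K := J_le_M K J hJ x hx
  have hMV : M K ≤ Submodule.restrictScalars K (J ^ 2 : Ideal (AddMonoidAlgebra K ℚ))
      ⊔ (K ∙ (AddMonoidAlgebra.single (1 : ℚ) (1 : K) - 1)) := by
    rw [M, Submodule.span_le]
    rintro y ⟨a, rfl⟩
    have hdecomp : AddMonoidAlgebra.single a (1 : K) - 1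
        = (AddMonoidAlgebra.single a (1 : K) - 1
            - (a : K) • (AddMonoidAlgebra.single (1 : ℚ) (1 : K) - 1))
          + (a : K) • (AddMonoidAlgebra.single (1 : ℚ) (1 : K) - 1) := by ring
    rw [hdecomp]
    exact Submodule.add_mem _
      (Submodule.mem_sup_left (key_congr K J hJ a))
      (Submodule.mem_sup_right (Submodule.smul_mem _ _ (Submodule.mem_span_singleton_self _)))
  exact hMV hM

theorem step_case : ∀ n : ℕ, 1 ≤ n →
    ∀ x ∈ (J ^ n : Ideal (AddMonoidAlgebra K ℚ)),
      x ∈ Submodule.restrictScalars K (J ^ (n + 1) : Ideal (AddMonoidAlgebra K ℚ))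
        ⊔ (K ∙ ((AddMonoidAlgebra.single (1 : ℚ) (1 : K) - 1) ^ n)) := by
  intro n hn
  set f : AddMonoidAlgebra K ℚ := AddMonoidAlgebra.single (1 : ℚ) (1 : K) - 1 with hf
  have hfJ : f ∈ J := sub_one_mem K J hJ 1
  induction n with
  | zero => omega
  | succ m ih =>
    rcases Nat.eq_or_lt_of_le hn with h1 | h2
    · -- m + 1 = 1, i.e. m = 0
      have hm : m = 0 := by omega
      subst hm
      intro x hx
      simpa [pow_one] using base_case K J hJ x (by simpa [pow_one] using hx)
    · have hm : 1 ≤ m := by omega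
      intro x hx
      rw [pow_succ] at hx
      refine Submodule.mul_induction_on hx ?_ ?_
      · intro y hy z hz
        obtain ⟨u, hu, w, hw, huw⟩ := Submodule.mem_sup.mp (ih hm y hy)
        obtain ⟨c, rfl⟩ := Submodule.mem_span_singleton.mp hw
        obtain ⟨v, hv, w2, hw2, hvw⟩ := Submodule.mem_sup.mp (base_case K J hJ z hz)
        obtain ⟨d, rfl⟩ := Submodule.mem_span_singleton.mp hw2
        have hu' : u ∈ (J ^ (m + 1) : Ideal (AddMonoidAlgebra K ℚ)) := hu
        have hv' : v ∈ (J ^ 2 : Ideal (AddMonoidAlgebra K ℚ)) := hv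
        have hexp : y * z = (u * v + d • (u * f) + c • (f ^ m * v))
            + (c * d) • f ^ (m + 1) := by
          rw [← huw, ← hvw, hf]
          simp only [Algebra.smul_def, map_mul]
          ring
        rw [hexp]
        have hJv : v ∈ J := (Ideal.pow_le_self two_ne_zero) hv'
        have h1 : u * v ∈ (J ^ (m + 1 + 1) : Ideal (AddMonoidAlgebra K ℚ)) := by
          rw [pow_succ]
          exact Ideal.mul_mem_mul hu' hJv
        have h2 : u * f ∈ (J ^ (m + 1 + 1) : Ideal (AddMonoidAlgebra K ℚ)) := by
          rw [pow_succ]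
          exact Ideal.mul_mem_mul hu' hfJ
        have h3 : f ^ m * v ∈ (J ^ (m + 1 + 1) : Ideal (AddMonoidAlgebra K ℚ)) := by
          have hmm : (m + 1 + 1) = m + 2 := by ring
          rw [hmm, pow_add]
          exact Ideal.mul_mem_mul (Ideal.pow_mem_pow hfJ m) hv'
        refine Submodule.add_mem _ (Submodule.mem_sup_left ?_) (Submodule.mem_sup_right ?_)
        · exact Submodule.add_mem _ (Submodule.add_mem _ h1
            (Submodule.smul_mem _ d h2)) (Submodule.smul_mem _ c h3)
        · exact Submodule.smul_mem _ _ (Submodule.mem_span_singleton_self _)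
      · intro y z hy hz
        exact Submodule.add_mem _ hy hz

omit hJ

/-- The exponential monoid hom `ℚ → K⟦X⟧ˣ`-ish. -/
noncomputable def E : Multiplicative ℚ →* PowerSeries K where
  toFun a := rescale ((Multiplicative.toAdd a : ℚ) : K) (exp K)
  map_one' := by
    show rescale ((Multiplicative.toAdd (1 : Multiplicative ℚ) : ℚ) : K) (exp K) = 1
    rw [toAdd_one, Rat.cast_zero, rescale_zero]
    simp [constantCoeff_exp]
  map_mul' a b := by
    show rescale ((Multiplicative.toAdd (a * b) : ℚ) : K) (exp K) = _
    rw [toAdd_mul, Rat.cast_add]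
    exact (exp_mul_exp_eq_exp_add _ _).symm

noncomputable def Φ : AddMonoidAlgebra K ℚ →ₐ[K] PowerSeries K :=
  AddMonoidAlgebra.lift K (PowerSeries K) ℚ (E K)

@[simp] lemma Φ_single (a : ℚ) :
    Φ K (AddMonoidAlgebra.single a (1 : K)) = rescale ((a : K)) (exp K) := by
  rw [Φ, AddMonoidAlgebra.lift_single, one_smul]
  rfl

include hJ

theorem pow_not_mem (n : ℕ) :
    (AddMonoidAlgebra.single (1 : ℚ) (1 : K) - 1) ^ n
      ∉ (J ^ (n + 1) : Ideal (AddMonoidAlgebra K ℚ)) := by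
  intro h
  set f : AddMonoidAlgebra K ℚ := AddMonoidAlgebra.single (1 : ℚ) (1 : K) - 1 with hf
  have hmapJ : Ideal.map (Φ K) J ≤ Ideal.span {(X : K⟦X⟧)} := by
    rw [hJ, Ideal.map_span]
    rw [Ideal.span_le]
    rintro y ⟨x, ⟨N, hN, rfl⟩, rfl⟩
    rw [SetLike.mem_coe, Ideal.mem_span_singleton, map_sub, map_one, Φ_single]
    rw [X_dvd_iff, map_sub, map_one, ← coeff_zero_eq_constantCoeff_apply, coeff_rescale,
      pow_zero, one_mul, coeff_zero_eq_constantCoeff_apply, constantCoeff_exp, sub_self]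
  have hmem : Φ K (f ^ n) ∈ Ideal.span {(X : K⟦X⟧) ^ (n + 1)} := by
    have h1 : Φ K (f ^ n) ∈ Ideal.map (Φ K) (J ^ (n + 1)) :=
      Ideal.mem_map_of_mem _ h
    rw [Ideal.map_pow] at h1
    have h2 : Ideal.map (Φ K) J ^ (n + 1) ≤ Ideal.span {(X : K⟦X⟧)} ^ (n + 1) :=
      Ideal.pow_right_mono hmapJ (n + 1)
    rw [Ideal.span_singleton_pow] at h2
    exact h2 h1
  rw [Ideal.mem_span_singleton] at hmem
  have hΦf : Φ K f = exp K - 1 := by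
    rw [hf, map_sub, map_one, Φ_single, Rat.cast_one, rescale_one]
    rfl
  rw [map_pow, hΦf] at hmem
  -- coefficient n of (exp - 1)^n is 1
  obtain ⟨g, hg⟩ := X_dvd_iff.mpr (by simp [constantCoeff_exp] :
    constantCoeff (exp K - 1) = 0)
  have hg0 : constantCoeff g = 1 := by
    have h1 : coeff 1 (exp K - 1) = 1 := by
      rw [map_sub, coeff_exp]
      simp
    rw [hg, coeff_succ_X_mul, coeff_zero_eq_constantCoeff] at h1
    exact h1
  have hcoeff : coeff n ((exp K - 1) ^ n) = 1 := by
    rw [hg, mul_pow]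
    have h2 := coeff_X_pow_mul (g ^ n) n 0
    rw [zero_add] at h2
    rw [h2, coeff_zero_eq_constantCoeff, map_pow, hg0, one_pow]
  have hzero : coeff n ((exp K - 1) ^ n) = 0 :=
    X_pow_dvd_iff.mp hmem n (by omega)
  rw [hcoeff] at hzero
  exact one_ne_zero hzero

end Stmt12

set_option maxHeartbeats 1000000 in
set_option synthInstance.maxHeartbeats 1000000 in
/-- In the group algebra `K[ℚ]` (written `⋃ K[t^{1/N}, t⁻¹]`), let `J` be the ideal generated
by the elements `t^{1/N} - 1`, `N ≥ 1` (the augmentation ideal). If `char K = 0` then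
`J^n/J^{n+1}` is a one-dimensional `K`-vector space for every `n ≥ 1`. -/
theorem stmt_12 (K : Type*) [Field K] [CharZero K]
    (J : Ideal (AddMonoidAlgebra K ℚ))
    (hJ : J = Ideal.span {x : AddMonoidAlgebra K ℚ |
      ∃ N : ℕ, 0 < N ∧ x = AddMonoidAlgebra.single ((N : ℚ)⁻¹) 1 - 1})
    (n : ℕ) (hn : 1 ≤ n) :
    Module.rank K
      (↥(Submodule.restrictScalars K (J ^ n : Ideal (AddMonoidAlgebra K ℚ))) ⧸
        Submodule.comap (Submodule.restrictScalars K (J ^ n : Ideal (AddMonoidAlgebra K ℚ))).subtype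
          (Submodule.restrictScalars K (J ^ (n + 1) : Ideal (AddMonoidAlgebra K ℚ)))) = 1 := by
  classical
  set f : AddMonoidAlgebra K ℚ := AddMonoidAlgebra.single (1 : ℚ) (1 : K) - 1 with hf
  have hfJ : f ∈ J := Stmt12.sub_one_mem K J hJ 1
  set Wn := Submodule.restrictScalars K (J ^ n : Ideal (AddMonoidAlgebra K ℚ)) with hWn
  set N := Submodule.comap Wn.subtype
    (Submodule.restrictScalars K (J ^ (n + 1) : Ideal (AddMonoidAlgebra K ℚ))) with hN
  have hfn : f ^ n ∈ (J ^ n : Ideal (AddMonoidAlgebra K ℚ)) := Ideal.pow_mem_pow hfJ n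
  let e : Wn := ⟨f ^ n, hfn⟩
  have hspan : ∀ q : Wn ⧸ N, ∃ c : K, c • (Submodule.Quotient.mk e : Wn ⧸ N) = q := by
    intro q
    obtain ⟨x, rfl⟩ := Submodule.Quotient.mk_surjective N q
    have hx := Stmt12.step_case K J hJ n hn x.1 x.2
    obtain ⟨u, hu, w, hw, huw⟩ := Submodule.mem_sup.mp hx
    obtain ⟨c, rfl⟩ := Submodule.mem_span_singleton.mp hw
    refine ⟨c, ?_⟩
    rw [← Submodule.Quotient.mk_smul, Submodule.Quotient.eq]
    rw [Submodule.mem_comap]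
    show (c • e - x : Wn).1 ∈ Submodule.restrictScalars K (J ^ (n + 1))
    have h1 : (c • e - x : Wn).1 = c • f ^ n - x.1 := rfl
    have h2 : c • f ^ n - x.1 = -u := by rw [← huw]; abel
    rw [h1, h2]
    exact neg_mem hu
  have hle : Module.rank K (Wn ⧸ N) ≤ 1 :=
    rank_le_one_iff.mpr ⟨Submodule.Quotient.mk e, fun v => hspan v⟩
  have hnz : (Submodule.Quotient.mk e : Wn ⧸ N) ≠ 0 := by
    intro h0
    have hmem := (Submodule.Quotient.mk_eq_zero N).mp h0
    rw [Submodule.mem_comap] at hmem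
    exact Stmt12.pow_not_mem K J hJ n hmem
  have hpos : 0 < Module.rank K (Wn ⧸ N) :=
    rank_pos_iff_exists_ne_zero.mpr ⟨Submodule.Quotient.mk e, hnz⟩
  exact le_antisymm hle (Cardinal.one_le_iff_pos.mpr hpos)
end

section
/- Let $K$ be a field and consider the group algebra $K[\mathbb{Q}]$ of the additive group of rationals, written as $\bigcup_{N\ge1} K[t^{1/N}, t^{-1}]$. Let $I$ be an ideal of $K[\mathbb{Q}]$ invariant under the automorphisms induced by $t^a \mapsto t^{ca}$ for all $c \in \mathbb{Q}^{\times}$. If $P(t) \in K[t]$ with $P(0) \ne 0$ generates $I \cap K[t, t^{-1}]$ modulo units and $P(\alpha) = 0$ for some $\alpha$ in an algebraic closure of $K$, then $\alpha$ is a root of unity. -/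
open Polynomial

/-- Let `I` be an ideal of the group algebra `K[ℚ]` invariant under the automorphisms
`t^a ↦ t^{ca}`, `c ∈ ℚ^×`. If `P ∈ K[t]` with `P(0) ≠ 0` generates `I ∩ K[t,t⁻¹]`
(the preimage of `I` under `K[t,t⁻¹] → K[ℚ]`), then every root of `P` in an algebraic
closure of `K` is a root of unity. -/
theorem stmt_13 (K : Type*) [Field K] (I : Ideal (AddMonoidAlgebra K ℚ))
    (hinv : ∀ c : ℚ, c ≠ 0 →
      Ideal.map (AddMonoidAlgebra.mapDomainRingHom K (AddMonoidHom.mulLeft c)) I = I)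
    (P : K[X]) (hP0 : P.eval 0 ≠ 0)
    (hgen : Ideal.comap
        (AddMonoidAlgebra.mapDomainRingHom K (Int.castAddHom ℚ) :
          LaurentPolynomial K →+* AddMonoidAlgebra K ℚ) I
      = Ideal.span {Polynomial.toLaurent P})
    (α : AlgebraicClosure K) (hα : Polynomial.aeval α P = 0) :
    ∃ k : ℕ, 0 < k ∧ α ^ k = 1 := by
  classical
  -- Key step: P divides P.comp (X ^ M) for all M ≥ 1
  have key : ∀ M : ℕ, 0 < M → P ∣ P.comp (X ^ M) := by
    intro M hM
    set ψ : LaurentPolynomial K →+* LaurentPolynomial K :=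
      AddMonoidAlgebra.mapDomainRingHom K (AddMonoidHom.mulLeft (M : ℤ)) with hψ
    set φ : LaurentPolynomial K →+* AddMonoidAlgebra K ℚ :=
      AddMonoidAlgebra.mapDomainRingHom K (Int.castAddHom ℚ) with hφ
    set σ : AddMonoidAlgebra K ℚ →+* AddMonoidAlgebra K ℚ :=
      AddMonoidAlgebra.mapDomainRingHom K (AddMonoidHom.mulLeft ((M : ℕ) : ℚ)) with hσ
    have hcomm : ∀ x : LaurentPolynomial K, φ (ψ x) = σ (φ x) := by
      intro x
      simp only [hψ, hφ, hσ, AddMonoidAlgebra.mapDomainRingHom_apply,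
        AddMonoidHom.toFun_eq_coe, Finsupp.mapDomain.addMonoidHom_apply]
      apply AddMonoidAlgebra.coeff_injective
      simp only [AddMonoidAlgebra.coeff_mapDomain]
      rw [← Finsupp.mapDomain_comp, ← Finsupp.mapDomain_comp]
      congr 1
      funext n
      simp [Function.comp]
    -- ψ ∘ toLaurent = toLaurent ∘ (comp with X^M)
    have hψsingle : ∀ (n : ℤ) (r : K), ψ (AddMonoidAlgebra.single n r) = AddMonoidAlgebra.single ((M : ℤ) * n) r := by
      intro n r
      simp only [hψ, AddMonoidAlgebra.mapDomainRingHom_apply,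
        AddMonoidHom.toFun_eq_coe, Finsupp.mapDomain.addMonoidHom_apply]
      rw [AddMonoidAlgebra.mapDomain_single]
      rfl
    have hcompose : ψ.comp (toLaurent) =
        (toLaurent (R := K)).comp (eval₂RingHom Polynomial.C (X ^ M)) := by
      apply Polynomial.ringHom_ext
      · intro a
        simp only [RingHom.comp_apply, coe_eval₂RingHom, eval₂_C, toLaurent_C]
        have : (LaurentPolynomial.C a : LaurentPolynomial K) = AddMonoidAlgebra.single (0 : ℤ) a := rfl
        rw [this, hψsingle, mul_zero]
      · simp only [RingHom.comp_apply, coe_eval₂RingHom, eval₂_X, toLaurent_X, toLaurent_X_pow]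
        have : (LaurentPolynomial.T (R := K) 1) = AddMonoidAlgebra.single (1 : ℤ) (1 : K) := rfl
        rw [this, hψsingle, mul_one]
        rfl
    have hcomp : ψ (toLaurent P) = toLaurent (P.comp (X ^ M)) := by
      have := congrArg (fun f => f P) hcompose
      simpa [Polynomial.comp] using this
    -- membership chase
    have h1 : φ (toLaurent P) ∈ I := by
      have : toLaurent P ∈ Ideal.comap φ I := by
        rw [hgen]; exact Ideal.mem_span_singleton_self _
      exact this
    have h2 : σ (φ (toLaurent P)) ∈ I := by
      have hM0 : ((M : ℕ) : ℚ) ≠ 0 := by exact_mod_cast hM.ne'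
      rw [← hinv ((M : ℕ) : ℚ) hM0]
      exact Ideal.mem_map_of_mem σ h1
    have h3 : toLaurent (P.comp (X ^ M)) ∈ Ideal.span {toLaurent P} := by
      rw [← hgen, ← hcomp]
      show φ (ψ (toLaurent P)) ∈ I
      rw [hcomm]
      exact h2
    obtain ⟨g, hg⟩ := Ideal.mem_span_singleton.mp h3
    obtain ⟨n, q, hq⟩ := g.exists_T_pow
    have heq : P.comp (X ^ M) * X ^ n = P * q := by
      apply toLaurent_injective
      rw [map_mul, map_mul, toLaurent_X_pow, hg, mul_assoc, hq]
    have hdvd : P ∣ P.comp (X ^ M) * X ^ n := ⟨q, heq⟩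
    have hXP : IsCoprime (X : K[X]) P :=
      irreducible_X.coprime_iff_not_dvd.mpr (by
        rw [X_dvd_iff, coeff_zero_eq_eval_zero]; exact hP0)
    exact (hXP.pow_left.symm).dvd_of_dvd_mul_right hdvd
  -- Hence α^M is a root of P for all M ≥ 1
  have hroot : ∀ M : ℕ, 0 < M → Polynomial.aeval (α ^ M) P = 0 := by
    intro M hM
    obtain ⟨c, hc⟩ := key M hM
    have : Polynomial.aeval α (P.comp (X ^ M)) = Polynomial.aeval (α ^ M) P := by
      rw [aeval_comp]; simp
    rw [← this, hc, map_mul, hα, zero_mul]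
  -- α ≠ 0
  have hαne : α ≠ 0 := by
    intro h
    rw [h] at hα
    have : Polynomial.aeval (0 : AlgebraicClosure K) P
        = algebraMap K (AlgebraicClosure K) (P.eval 0) := by
      rw [aeval_def, eval₂_at_zero, coeff_zero_eq_eval_zero]
    rw [this] at hα
    exact hP0 ((_root_.map_eq_zero _).mp hα)
  -- Finiteness of roots
  have hPne : P ≠ 0 := fun h => hP0 (by simp [h])
  set Q := P.map (algebraMap K (AlgebraicClosure K)) with hQ
  have hQne : Q ≠ 0 := Polynomial.map_ne_zero hPne
  have hmem : ∀ M : ℕ, α ^ (M + 1) ∈ Q.roots.toFinset := by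
    intro M
    rw [Multiset.mem_toFinset, mem_roots hQne]
    show Q.IsRoot _
    rw [hQ, IsRoot, eval_map, ← aeval_def]
    exact hroot (M + 1) (Nat.succ_pos M)
  obtain ⟨i, j, hij, hfe⟩ := Finite.exists_ne_map_eq_of_infinite
    (fun M : ℕ => (⟨α ^ (M + 1), hmem M⟩ : Q.roots.toFinset))
  have heq : α ^ (i + 1) = α ^ (j + 1) := by
    simpa [Subtype.ext_iff] using hfe
  have main : ∀ i j : ℕ, i < j → α ^ (i + 1) = α ^ (j + 1) →
      ∃ k : ℕ, 0 < k ∧ α ^ k = 1 := by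
    intro i j hlt heq
    refine ⟨j - i, by omega, ?_⟩
    have h1 : α ^ (i + 1) * α ^ (j - i) = α ^ (i + 1) * 1 := by
      rw [mul_one, ← pow_add]
      rw [show i + 1 + (j - i) = j + 1 by omega]
      exact heq.symm
    exact mul_left_cancel₀ (pow_ne_zero _ hαne) h1
  rcases hij.lt_or_gt with h | h
  · exact main i j h heq
  · exact main j i h heq.symm
end

section
/- Let $F$ be a division ring, $V$ a left $F$-vector space, and $L$ a subspace with $\dim(V/L)$ infinite. Let $L'$ be a subspace with $V = L + L'$, $L' \neq V$, and $L \cap L' \neq L$. Then the orbit of $L'$ under the stabilizer of $L$ in $\mathrm{GL}_F(V)$ is infinite. -/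
open Submodule

noncomputable def shearEquiv {F V : Type*} [DivisionRing F] [AddCommGroup V] [Module F V]
    (f : V →ₗ[F] F) (v : V) (hv : f v = 0) : V ≃ₗ[F] V :=
  LinearEquiv.ofLinear (LinearMap.id + f.smulRight v) (LinearMap.id - f.smulRight v)
    (by ext x; simp [hv, smul_smul]) (by ext x; simp [hv, smul_smul])

@[simp] lemma shearEquiv_apply {F V : Type*} [DivisionRing F] [AddCommGroup V] [Module F V]
    (f : V →ₗ[F] F) (v : V) (hv : f v = 0) (x : V) :
    shearEquiv f v hv x = x + f x • v := rfl

/-- If `dim V/L` is infinite and `L'` satisfies `V = L + L'`, `L' ≠ V`, `L ∩ L' ≠ L`,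
then the orbit of `L'` under the stabilizer of `L` in `GL(V)` is infinite. -/
theorem stmt_17 (F V : Type*) [DivisionRing F] [AddCommGroup V] [Module F V]
    (L L' : Submodule F V) (hL : Cardinal.aleph0 ≤ Module.rank F (V ⧸ L))
    (hsum : L ⊔ L' = ⊤) (hne : L' ≠ ⊤) (hcap : L ⊓ L' ≠ L) :
    {M : Submodule F V | ∃ g : V ≃ₗ[F] V,
      Submodule.map (g : V →ₗ[F] V) L = L ∧ Submodule.map (g : V →ₗ[F] V) L' = M}.Infinite := by
  -- pick v ∈ L \ L'
  have hnotle : ¬ L ≤ L' := fun h => hcap (inf_eq_left.mpr h)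
  obtain ⟨v, hvL, hvL'⟩ := Set.not_subset.mp hnotle
  -- basis of V ⧸ L
  let B := Module.Basis.ofVectorSpace F (V ⧸ L)
  have hinf : Infinite (Module.Basis.ofVectorSpaceIndex F (V ⧸ L)) := by
    rw [Cardinal.infinite_iff, B.mk_eq_rank'']
    exact hL
  -- functionals
  let f : Module.Basis.ofVectorSpaceIndex F (V ⧸ L) → (V →ₗ[F] F) :=
    fun i => (B.coord i).comp L.mkQ
  have hfv : ∀ i, f i v = 0 := by
    intro i
    simp [f, (Submodule.Quotient.mk_eq_zero L).mpr hvL]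
  have hfL : ∀ i, ∀ x ∈ L, f i x = 0 := by
    intro i x hx
    simp [f, (Submodule.Quotient.mk_eq_zero L).mpr hx]
  let g : Module.Basis.ofVectorSpaceIndex F (V ⧸ L) → (V ≃ₗ[F] V) := fun i => shearEquiv (f i) v (hfv i)
  have hgL : ∀ i, Submodule.map ((g i) : V →ₗ[F] V) L = L := by
    intro i
    apply le_antisymm
    · rintro _ ⟨x, hx, rfl⟩
      simpa [g, hfL i x hx] using hx
    · intro x hx
      exact ⟨x, hx, by simp [g, hfL i x hx]⟩
  apply Set.infinite_of_injective_forall_mem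
    (f := fun i => Submodule.map ((g i) : V →ₗ[F] V) L')
  case hi =>
    -- injectivity
    intro i j hij
    by_contra hne'
    -- pick x ∈ L' with mkQ x = B i
    obtain ⟨w, hw⟩ := L.mkQ_surjective (B i)
    obtain ⟨l, hl, x, hx, rfl⟩ := Submodule.mem_sup.mp (hsum ▸ Submodule.mem_top (x := w))
    have hxq : L.mkQ x = B i := by
      rw [← hw]
      simp [Submodule.Quotient.mk_eq_zero L |>.mpr hl, Submodule.mkQ_apply,
        Submodule.Quotient.mk_add]
    have hfix : f i x = 1 := by simp [f, hxq]
    have hfjx : f j x = 0 := by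
      simp only [f, LinearMap.comp_apply, hxq, Module.Basis.coord_apply, Module.Basis.repr_self]
      exact Finsupp.single_eq_of_ne (Ne.symm hne')
    have hij' : Submodule.map ((g i) : V →ₗ[F] V) L' = Submodule.map ((g j) : V →ₗ[F] V) L' := hij
    have hmem : (g i) x ∈ Submodule.map ((g j) : V →ₗ[F] V) L' := by
      rw [← hij']; exact ⟨x, hx, rfl⟩
    obtain ⟨y, hy, hyx⟩ := hmem
    -- y + f j y • v = x + v
    have key : x - y = (f j y - 1) • v := by
      have : y + f j y • v = x + (1:F) • v := by
        simpa [g, hfix] using hyx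
      rw [one_smul] at this
      have h2 : x = y + f j y • v - v := eq_sub_of_add_eq this.symm
      rw [h2, sub_smul, one_smul]
      abel
    by_cases hc : f j y = 1
    · have hxy : x = y := by
        have := key
        rw [hc, sub_self, zero_smul, sub_eq_zero] at this
        exact this
      rw [hxy] at hfjx
      rw [hc] at hfjx
      exact one_ne_zero hfjx
    · apply hvL'
      have hv' : v = (f j y - 1)⁻¹ • (x - y) := by
        rw [key, smul_smul, inv_mul_cancel₀ (sub_ne_zero.mpr hc), one_smul]
      rw [hv']
      exact L'.smul_mem _ (L'.sub_mem hx hy)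
  case hf =>
    intro i
    exact ⟨g i, hgL i, rfl⟩
end

section
/- Let $F$ be an infinite division ring, $V$ a left $F$-vector space, and $L$ a subspace with $L \cong F^{\oplus r}$ infinite as a set (e.g. $r \ge 1$ since $F$ is infinite). If $L'$ is a subspace with $L \cap L' = 0$ whose orbit under the stabilizer of $L$ in $\mathrm{GL}_F(V)$ is finite, then $L' = 0$. -/
/-- Over an infinite division ring: if `L` is an infinite subspace, `L ∩ L' = 0`, and the
orbit of `L'` under the stabilizer of `L` in `GL(V)` is finite, then `L' = 0`. -/
theorem stmt_18 (F V : Type*) [DivisionRing F] [Infinite F] [AddCommGroup V] [Module F V]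
    (L L' : Submodule F V) (hLinf : Infinite L) (hcap : L ⊓ L' = ⊥)
    (horb : {M : Submodule F V | ∃ g : V ≃ₗ[F] V,
      Submodule.map (g : V →ₗ[F] V) L = L ∧ Submodule.map (g : V →ₗ[F] V) L' = M}.Finite) :
    L' = ⊥ := by
  by_contra hne
  obtain ⟨u, huL', hu0⟩ := Submodule.exists_mem_ne_zero_of_ne_bot hne
  have huL : u ∉ L := by
    intro h
    apply hu0
    have : u ∈ L ⊓ L' := ⟨h, huL'⟩
    rwa [hcap, Submodule.mem_bot] at this
  set q : V ⧸ L := L.mkQ u with hqdef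
  have hq : q ≠ 0 := by
    simpa [hqdef, Submodule.Quotient.mk_eq_zero] using huL
  obtain ⟨C, hC⟩ := Submodule.exists_isCompl (Submodule.span F {q})
  set φ : (V ⧸ L) →ₗ[F] F :=
    (((LinearEquiv.toSpanNonzeroSingleton F (V ⧸ L) q hq).symm :
      Submodule.span F {q} →ₗ[F] F).comp (Submodule.linearProjOfIsCompl _ C hC)) with hφ
  set f : V →ₗ[F] F := φ.comp L.mkQ with hf
  have hfL : ∀ v ∈ L, f v = 0 := by
    intro v hv
    have h0 : L.mkQ v = 0 := (Submodule.Quotient.mk_eq_zero L).mpr hv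
    simp [hf, h0]
  have hfu : f u = 1 := by
    have h1 : Submodule.linearProjOfIsCompl _ C hC q
        = ⟨q, Submodule.mem_span_singleton_self q⟩ := by
      exact Submodule.linearProjOfIsCompl_apply_left hC ⟨q, Submodule.mem_span_singleton_self q⟩
    have h2 : (⟨q, Submodule.mem_span_singleton_self q⟩ : Submodule.span F {q})
        = LinearEquiv.toSpanNonzeroSingleton F (V ⧸ L) q hq 1 := by
      ext
      simp [LinearEquiv.toSpanNonzeroSingleton]
    have h3 : f u = (LinearEquiv.toSpanNonzeroSingleton F (V ⧸ L) q hq).symm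
        (Submodule.linearProjOfIsCompl _ C hC q) := rfl
    rw [h3, h1, h2, LinearEquiv.symm_apply_apply]
  -- shear maps
  have hfx : ∀ x : L, f (x : V) = 0 := fun x => hfL x x.2
  let g : L → (V ≃ₗ[F] V) := fun x =>
    LinearEquiv.ofLinear (LinearMap.id + f.smulRight (x : V)) (LinearMap.id - f.smulRight (x : V))
      (by ext v; simp [hfx x, smul_smul, sub_smul])
      (by ext v; simp [hfx x, smul_smul, add_smul])
  have hg : ∀ (x : L) (v : V), ((g x : V →ₗ[F] V)) v = v + f v • (x : V) := fun x v => rfl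
  have hg2 : ∀ (x : L) (v : V), (g x) v = v + f v • (x : V) := fun x v => rfl
  have hgL : ∀ x : L, Submodule.map ((g x) : V →ₗ[F] V) L = L := by
    intro x
    apply le_antisymm
    · rintro _ ⟨v, hv, rfl⟩
      rw [hg, hfL v hv, zero_smul, add_zero]; exact hv
    · intro v hv
      refine ⟨v, hv, ?_⟩
      rw [hg, hfL v hv, zero_smul, add_zero]
  set h : L → Submodule F V := fun x => Submodule.map ((g x) : V →ₗ[F] V) L' with hh
  have hmem : ∀ x : L, h x ∈ {M : Submodule F V | ∃ g : V ≃ₗ[F] V,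
      Submodule.map (g : V →ₗ[F] V) L = L ∧ Submodule.map (g : V →ₗ[F] V) L' = M} :=
    fun x => ⟨g x, hgL x, rfl⟩
  have hinj : Function.Injective h := by
    intro x y hxy
    have hu1 : u + (x : V) ∈ h x := by
      refine ⟨u, huL', ?_⟩
      rw [hg, hfu, one_smul]
    rw [hxy] at hu1
    obtain ⟨w, hw, hweq⟩ := hu1
    rw [hg] at hweq
    have hfw : f w = 1 := by
      have := congrArg f hweq
      simpa [hfx y, hfx x, hfu, smul_eq_mul] using this
    rw [hfw, one_smul] at hweq
    have hmemL : (x : V) - (y : V) ∈ L := sub_mem x.2 y.2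
    have hmemL' : (x : V) - (y : V) ∈ L' := by
      have : (x : V) - (y : V) = w - u := by
        have := hweq
        linear_combination (norm := module) -this
      rw [this]; exact sub_mem hw huL'
    have : (x : V) - (y : V) ∈ L ⊓ L' := ⟨hmemL, hmemL'⟩
    rw [hcap, Submodule.mem_bot, sub_eq_zero] at this
    exact Subtype.ext this
  exact Set.infinite_of_injective_forall_mem hinj hmem horb
end
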